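/- arXiv:1712.00839 — 4 statements merged into one kernel-verified Lean document; each statement's English description precedes it below -/
import Mathlib

section
/- For all positive integers r and n, the following identity holds in the ring of formal power series in t with coefficients in ℤ[q,u]: (∑_{k ≥ 0} ([k+1]_q + u·[r−1]_u·[k]_q)^n t^k) · ∏_{j=0}^{n} (1 − q^j t) = ∑_{(ε,π) ∈ ℤ_r ≀ 𝔖_n} q^{maj(ε,π)} t^{des(ε,π)} u^{col(ε)}. -/
open Finset

/-- 1-based value of `π` at position `i ∈ {1,…,n}`, with the convention `π(0) = 0`. -/
def wval {n : ℕ} (π : Equiv.Perm (Fin n)) (i : ℕ) : ℕ :=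
  if h : 1 ≤ i ∧ i ≤ n then (π ⟨i - 1, by omega⟩ : ℕ) + 1 else 0

/-- Color at position `i` (1-based), with the convention `ε_0 = 0`. -/
def wcolor {n : ℕ} (ε : Fin n → ℕ) (i : ℕ) : ℕ :=
  if h : 1 ≤ i ∧ i ≤ n then ε ⟨i - 1, by omega⟩ else 0

/-- The Biagioli–Zeng order on colored letters: `(j,c) > (k,d)`. -/
def bzGT (a b : ℕ × ℕ) : Prop :=
  (a.2 = 0 ∧ b.2 = 0 ∧ b.1 < a.1) ∨ (0 < a.2 ∧ 0 < b.2 ∧ a.1 < b.1) ∨ (a.2 = 0 ∧ 0 < b.2)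

instance (a b : ℕ × ℕ) : Decidable (bzGT a b) := by unfold bzGT; exact inferInstance

/-- The descent set `Des(ε,π) ⊆ {0,…,n-1}` of a colored permutation. -/
def DesBZ {n : ℕ} (ε : Fin n → ℕ) (π : Equiv.Perm (Fin n)) : Finset ℕ :=
  (Finset.range n).filter fun i =>
    bzGT (wval π i, wcolor ε i) (wval π (i + 1), wcolor ε (i + 1))

def desBZ {n : ℕ} (ε : Fin n → ℕ) (π : Equiv.Perm (Fin n)) : ℕ := (DesBZ ε π).card

def majBZ {n : ℕ} (ε : Fin n → ℕ) (π : Equiv.Perm (Fin n)) : ℕ := ∑ i ∈ DesBZ ε π, i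

/-- The color weight `col(ε)`. -/
def colwt {n : ℕ} (ε : Fin n → ℕ) : ℕ := ∑ i, ε i

/-- Ordinary descent set `{i ∈ {1,…,n-1} : σ(i) > σ(i+1)}` (1-based). -/
def ordDes {n : ℕ} (σ : Equiv.Perm (Fin n)) : Finset ℕ :=
  (Finset.range n).filter fun i => 1 ≤ i ∧ wval σ (i + 1) < wval σ i

noncomputable def qP : MvPolynomial (Fin 2) ℤ := MvPolynomial.X 0
noncomputable def uP : MvPolynomial (Fin 2) ℤ := MvPolynomial.X 1
noncomputable def qNat (m : ℕ) : MvPolynomial (Fin 2) ℤ := ∑ i ∈ Finset.range m, qP ^ i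
noncomputable def uNat (m : ℕ) : MvPolynomial (Fin 2) ℤ := ∑ i ∈ Finset.range m, uP ^ i

/-- The monomial `m'(j,k)`. -/
noncomputable def mPrime (j k : ℕ) : MvPolynomial (Fin 2) ℤ :=
  if j ≤ k then qP ^ j else qP ^ ((j - 1) % k) * uP ^ ((j - 1) / k)

/-- Lattice points of `cone(F_ε)` at height `k`. -/
def Lset {n : ℕ} (ε : Fin n → ℕ) (k : ℕ) : Finset (Fin n → ℕ) :=
  Fintype.piFinset fun i =>
    if 0 < ε i then Finset.Ioc (k * ε i) (k * (ε i + 1)) else Finset.Icc 0 k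

/-!
Write `A_k = ∑ u^c q^v` over the pairs `(c, v)` with `c < r`, `v ≤ k`, and `v < k` when `c > 0`,
so that `A_k^n` enumerates maps `φ` from the letters `1, …, n` to such pairs. Listing the letters
by decreasing value, ties broken by the Biagioli–Zeng order, turns `φ` into a colored permutation
`(ε, π)` together with values `k ≥ a_1 ≥ ⋯ ≥ a_n ≥ 0` that drop strictly at every descent of
`(ε, π)`, the descent at `0` included: the condition on the pairs says exactly that a value `k` is
only allowed before the first descent, on uncolored letters. Subtracting from `a_i` the number of
descents at or after `i` makes the values weakly decreasing and bounded by `k - des`, and shifts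
their total by `maj`; weakly decreasing sequences have generating function
`1 / ∏_{j=0}^n (1 - q^j t)`.
-/
namespace WreathIdentity

open PowerSeries

/-- Tuples `k ≥ a 0 ≥ a 1 ≥ ⋯ ≥ a (n - 1) ≥ 0` that decrease strictly at each step `i ∈ D`,
step `i` going from position `i - 1` (from `k` when `i = 0`) to position `i`. -/
def descChains (D : Finset ℕ) (n k : ℕ) : Finset (Fin n → ℕ) :=
  (Fintype.piFinset fun _ => range (k + 1)).filter fun a =>
    ∀ i : Fin n, a i + (if (i : ℕ) ∈ D then 1 else 0) ≤ (Fin.cons k a : Fin (n + 1) → ℕ) i.castSucc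

lemma mem_descChains {D : Finset ℕ} {n k : ℕ} {a : Fin n → ℕ} :
    a ∈ descChains D n k ↔ ∀ i : Fin n,
      a i + (if (i : ℕ) ∈ D then 1 else 0) ≤ (Fin.cons k a : Fin (n + 1) → ℕ) i.castSucc := by
  refine ⟨fun h => (mem_filter.1 h).2, fun h => mem_filter.2 ⟨?_, h⟩⟩
  have hanti : Antitone (Fin.cons k a : Fin (n + 1) → ℕ) :=
    Fin.antitone_iff_succ_le.2 fun i => by simpa using le_of_add_le_left (h i)
  simp only [Fintype.mem_piFinset, mem_range, Nat.lt_succ_iff]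
  intro i
  simpa using hanti (Fin.zero_le i.succ)

lemma cons_mem_descChains_empty {n k j : ℕ} {b : Fin n → ℕ} :
    (Fin.cons j b : Fin (n + 1) → ℕ) ∈ descChains ∅ (n + 1) k ↔ j ≤ k ∧ b ∈ descChains ∅ n j := by
  simp [mem_descChains, Fin.forall_fin_succ]

def descentsFrom (D : Finset ℕ) (i : ℕ) : ℕ := #(D.filter (i ≤ ·))

section descentsFrom

variable {D : Finset ℕ} {n k : ℕ}

lemma descentsFrom_zero (D : Finset ℕ) : descentsFrom D 0 = #D := by
  simp [descentsFrom]

lemma descentsFrom_eq_add (D : Finset ℕ) (i : ℕ) :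
    descentsFrom D i = descentsFrom D (i + 1) + if i ∈ D then 1 else 0 := by
  rw [descentsFrom, descentsFrom, card_filter, card_filter, ← sum_ite_eq' D i fun _ => 1,
    ← sum_add_distrib]
  refine sum_congr rfl fun d _ => ?_
  split_ifs <;> omega

lemma descentsFrom_eq_zero (hD : D ⊆ range n) : descentsFrom D n = 0 := by
  rw [descentsFrom, card_eq_zero, filter_eq_empty_iff]
  exact fun d hd => by simpa using mem_range.1 (hD hd)

lemma sum_descentsFrom_succ (hD : D ⊆ range n) :
    ∑ p : Fin n, descentsFrom D (p + 1) = ∑ i ∈ D, i := by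
  simp only [descentsFrom, card_filter]
  rw [sum_comm]
  refine sum_congr rfl fun d hd => ?_
  have hdn := mem_range.1 (hD hd)
  rw [Fin.sum_univ_eq_sum_range (fun p => if p + 1 ≤ d then 1 else 0), ← card_filter,
    show (range n).filter (· + 1 ≤ d) = range d by ext p; simp; omega, card_range]

lemma descentsFrom_le_of_mem_descChains (hD : D ⊆ range n) {a : Fin n → ℕ}
    (ha : a ∈ descChains D n k) (i : Fin (n + 1)) :
    descentsFrom D i ≤ (Fin.cons k a : Fin (n + 1) → ℕ) i := by
  induction i using Fin.reverseInduction with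
  | last => simp [descentsFrom_eq_zero hD]
  | cast i ih =>
    have := mem_descChains.1 ha i
    rw [Fin.val_castSucc, descentsFrom_eq_add]
    simp only [Fin.cons_succ, Fin.val_succ] at ih
    omega

lemma cons_sub_descentsFrom (a : Fin n → ℕ) (i : Fin (n + 1)) :
    (Fin.cons (k - #D) (fun p => a p - descentsFrom D (p + 1)) : Fin (n + 1) → ℕ) i =
      (Fin.cons k a : Fin (n + 1) → ℕ) i - descentsFrom D i := by
  cases i using Fin.cases <;> simp [descentsFrom_zero]

lemma cons_add_descentsFrom (hk : #D ≤ k) (b : Fin n → ℕ) (i : Fin (n + 1)) :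
    (Fin.cons k (fun p => b p + descentsFrom D (p + 1)) : Fin (n + 1) → ℕ) i =
      (Fin.cons (k - #D) b : Fin (n + 1) → ℕ) i + descentsFrom D i := by
  cases i using Fin.cases <;> simp [descentsFrom_zero]
  omega

end descentsFrom

section sums

variable {R : Type*} [CommSemiring R] (q : R) {D : Finset ℕ} {n k : ℕ}

lemma sum_descChains_empty_succ :
    ∑ b ∈ descChains ∅ (n + 1) k, q ^ ∑ i, b i =
      ∑ j ∈ range (k + 1), q ^ j * ∑ b ∈ descChains ∅ n j, q ^ ∑ i, b i := by
  simp_rw [mul_sum, ← pow_add]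
  rw [sum_sigma']
  refine sum_nbij' (fun b => ⟨b 0, Fin.tail b⟩) (fun x => Fin.cons x.1 x.2) ?_ ?_ ?_ ?_ ?_
  · intro b hb
    rw [← Fin.cons_self_tail b, cons_mem_descChains_empty] at hb
    simpa [Nat.lt_succ_iff] using hb
  · rintro ⟨j, b⟩ hb
    simp only [mem_sigma, mem_range, Nat.lt_succ_iff] at hb
    exact cons_mem_descChains_empty.2 hb
  · intro b _
    simp
  · rintro ⟨j, b⟩ _
    simp
  · intro b _
    simp [Fin.sum_univ_succ, Fin.tail]

lemma sum_descChains (hD : D ⊆ range n) :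
    ∑ a ∈ descChains D n k, q ^ ∑ i, a i =
      if #D ≤ k then q ^ (∑ i ∈ D, i) * ∑ b ∈ descChains ∅ n (k - #D), q ^ ∑ i, b i else 0 := by
  split_ifs with hk
  swap
  · refine sum_eq_zero fun a ha => absurd ?_ hk
    simpa [descentsFrom_zero] using descentsFrom_le_of_mem_descChains hD ha 0
  rw [mul_sum]
  refine sum_nbij' (fun a p => a p - descentsFrom D (p + 1))
    (fun b p => b p + descentsFrom D (p + 1)) ?_ ?_ ?_ ?_ ?_
  · intro a ha
    refine mem_descChains.2 fun i => ?_
    have hle := descentsFrom_le_of_mem_descChains hD ha i.succ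
    have hstep := mem_descChains.1 ha i
    have hD_eq := descentsFrom_eq_add D i
    simp only [Fin.cons_succ, Fin.val_succ] at hle
    simp only [cons_sub_descentsFrom, Fin.val_castSucc, notMem_empty, if_false, add_zero]
    omega
  · intro b hb
    refine mem_descChains.2 fun i => ?_
    have hstep := mem_descChains.1 hb i
    have hD_eq := descentsFrom_eq_add D i
    simp only [notMem_empty, if_false, add_zero] at hstep
    simp only [cons_add_descentsFrom hk, Fin.val_castSucc]
    omega
  · intro a ha
    funext p
    have hle := descentsFrom_le_of_mem_descChains hD ha p.succ
    simp only [Fin.cons_succ, Fin.val_succ] at hle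
    dsimp only
    omega
  · intro b _
    simp
  · intro a ha
    have hle := descentsFrom_le_of_mem_descChains hD ha
    rw [← pow_add, ← sum_descentsFrom_succ hD, ← sum_add_distrib]
    congr 1
    refine sum_congr rfl fun p _ => ?_
    have := hle p.succ
    simp only [Fin.cons_succ, Fin.val_succ] at this
    omega

end sums

section series

variable {R : Type*} [CommRing R] (q : R)

def descChainSeries (D : Finset ℕ) (n : ℕ) : R⟦X⟧ :=
  PowerSeries.mk fun k => ∑ a ∈ descChains D n k, q ^ ∑ i, a i

@[simp]
lemma coeff_descChainSeries (D : Finset ℕ) (n k : ℕ) :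
    coeff k (descChainSeries q D n) = ∑ a ∈ descChains D n k, q ^ ∑ i, a i :=
  coeff_mk _ _

lemma rescale_C (c : R) : rescale q (C c) = C c := by
  ext m
  rcases m with _ | m <;> simp [coeff_rescale, coeff_C]

lemma rescale_one_sub_C_mul_X (c : R) : rescale q (1 - C c * X) = 1 - C (c * q) * X := by
  rw [map_sub, map_one, map_mul, rescale_C, rescale_X, map_mul, mul_assoc]

lemma descChainSeries_empty_succ (n : ℕ) :
    descChainSeries q ∅ (n + 1) = PowerSeries.mk 1 * rescale q (descChainSeries q ∅ n) := by
  ext k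
  simp only [coeff_descChainSeries, sum_descChains_empty_succ, coeff_mul, coeff_rescale, coeff_mk,
    Pi.one_apply, one_mul]
  rw [← Nat.sum_antidiagonal_swap, Nat.sum_antidiagonal_eq_sum_range_succ_mk]
  rfl

lemma descChainSeries_empty_mul_prod (n : ℕ) :
    descChainSeries q ∅ n * ∏ j ∈ range (n + 1), (1 - C (q ^ j) * X) = 1 := by
  induction n with
  | zero =>
    have hS : descChainSeries q ∅ 0 = PowerSeries.mk 1 := by
      ext k
      have h0 : descChains ∅ 0 k = {Fin.elim0} := eq_singleton_iff_unique_mem.2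
        ⟨mem_descChains.2 fun i => i.elim0, fun _ _ => Subsingleton.elim _ _⟩
      simp [h0]
    simpa [hS] using mk_one_mul_one_sub_eq_one (S := R)
  | succ n ih =>
    rw [descChainSeries_empty_succ, prod_range_succ', pow_zero, map_one, one_mul]
    calc PowerSeries.mk 1 * rescale q (descChainSeries q ∅ n) *
          ((∏ j ∈ range (n + 1), (1 - C (q ^ (j + 1)) * X)) * (1 - X))
        = (PowerSeries.mk 1 * (1 - X)) *
            rescale q (descChainSeries q ∅ n * ∏ j ∈ range (n + 1), (1 - C (q ^ j) * X)) := by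
          simp only [map_mul, map_prod, rescale_one_sub_C_mul_X, pow_succ]
          ring
      _ = 1 := by rw [ih, mk_one_mul_one_sub_eq_one, map_one, one_mul]

theorem descChainSeries_mul_prod {D : Finset ℕ} {n : ℕ} (hD : D ⊆ range n) :
    descChainSeries q D n * ∏ j ∈ range (n + 1), (1 - C (q ^ j) * X) =
      C (q ^ ∑ i ∈ D, i) * X ^ #D := by
  have hshift : descChainSeries q D n = C (q ^ ∑ i ∈ D, i) * X ^ #D * descChainSeries q ∅ n := by
    ext k
    rw [coeff_descChainSeries, sum_descChains q hD, mul_assoc, coeff_C_mul, coeff_X_pow_mul']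
    split_ifs <;> simp
  rw [hshift, mul_assoc, descChainSeries_empty_mul_prod, mul_one]

end series

/-- Ranks the letters `(value, color)` compatibly with `bzGT`; the letter `(0, 0)` standing for
`π(0)` gets rank `0`, between the colored and the uncolored letters. -/
def rank (l : ℕ × ℕ) : ℤ := if l.2 = 0 then l.1 else -l.1

lemma natAbs_rank (l : ℕ × ℕ) : (rank l).natAbs = l.1 := by
  unfold rank; split_ifs <;> simp

lemma bzGT_iff_rank_lt {l l' : ℕ × ℕ} (h : 0 < l'.2 → 0 < l'.1) :
    bzGT l l' ↔ rank l' < rank l := by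
  unfold bzGT rank; split_ifs <;> omega

def key (v : ℕ) (l : ℕ × ℕ) : ℕᵒᵈ ×ₗ ℤ := toLex (OrderDual.toDual v, rank l)

lemma key_lt_key_iff {v v' : ℕ} {l l' : ℕ × ℕ} (h : rank l ≠ rank l') :
    key v l < key v' l' ↔ v' + (if rank l' < rank l then 1 else 0) ≤ v := by
  simp only [key, Prod.Lex.toLex_lt_toLex, OrderDual.toDual_lt_toDual, OrderDual.toDual_inj]
  split_ifs <;> omega

section letters

variable {n : ℕ} (ε : Fin n → ℕ) (π : Equiv.Perm (Fin n))

def letter : Fin (n + 1) → ℕ × ℕ := Fin.cons (0, 0) fun p => ((π p : ℕ) + 1, ε p)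

lemma wval_wcolor_eq_letter (i : Fin (n + 1)) : (wval π i, wcolor ε i) = letter ε π i := by
  cases i using Fin.cases <;> simp [wval, wcolor, letter]

lemma rank_letter_injective : Function.Injective (rank ∘ letter ε π) := by
  intro i j h
  replace h := congrArg Int.natAbs h
  simp only [Function.comp_apply, natAbs_rank] at h
  cases i using Fin.cases <;> cases j using Fin.cases <;> simp_all [letter, Fin.val_inj]

lemma mem_DesBZ_iff (i : Fin n) :
    (i : ℕ) ∈ DesBZ ε π ↔ rank (letter ε π i.succ) < rank (letter ε π i.castSucc) := by
  have hcast := wval_wcolor_eq_letter ε π i.castSucc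
  have hsucc := wval_wcolor_eq_letter ε π i.succ
  simp only [Fin.val_castSucc, Fin.val_succ] at hcast hsucc
  rw [DesBZ, mem_filter, hcast, hsucc, bzGT_iff_rank_lt (by simp [letter])]
  simp

lemma DesBZ_subset_range : DesBZ ε π ⊆ range n := filter_subset _ _

lemma mem_descChains_DesBZ_iff {k : ℕ} {a : Fin n → ℕ} :
    a ∈ descChains (DesBZ ε π) n k ↔
      StrictMono fun i => key ((Fin.cons k a : Fin (n + 1) → ℕ) i) (letter ε π i) := by
  rw [mem_descChains, Fin.strictMono_iff_lt_succ]
  refine forall_congr' fun i => ?_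
  rw [key_lt_key_iff ((rank_letter_injective ε π).ne (Fin.castSucc_lt_succ (i := i)).ne),
    Fin.cons_succ]
  simp only [mem_DesBZ_iff]

end letters

def colorValuePairs (r k : ℕ) : Finset (ℕ × ℕ) :=
  (range r ×ˢ range (k + 1)).filter fun x => x.1 = 0 ∨ x.2 < k

-- The letter `j + 1` only enters through the sign of its rank.
lemma mem_colorValuePairs_iff {r k : ℕ} {x : ℕ × ℕ} (j : ℕ) :
    x ∈ colorValuePairs r k ↔ x.1 < r ∧ key k (0, 0) < key x.2 (j + 1, x.1) := by
  simp only [colorValuePairs, mem_filter, mem_product, mem_range, key, rank,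
    Prod.Lex.toLex_lt_toLex, OrderDual.toDual_lt_toDual, OrderDual.toDual_inj]
  split_ifs <;> omega

section assemble

variable {n : ℕ}

def assemble (ε : Fin n → ℕ) (π : Equiv.Perm (Fin n)) (a : Fin n → ℕ) : Fin n → ℕ × ℕ :=
  fun j => (ε (π.symm j), a (π.symm j))

@[simp]
lemma assemble_apply_perm (ε : Fin n → ℕ) (π : Equiv.Perm (Fin n)) (a : Fin n → ℕ) (p : Fin n) :
    assemble ε π a (π p) = (ε p, a p) := by
  simp [assemble]

def letterKey (φ : Fin n → ℕ × ℕ) (j : Fin n) : ℕᵒᵈ ×ₗ ℤ := key (φ j).2 ((j : ℕ) + 1, (φ j).1)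

lemma letterKey_injective (φ : Fin n → ℕ × ℕ) : Function.Injective (letterKey φ) := by
  intro j j' h
  have := congrArg (fun x => (ofLex x).2.natAbs) h
  simpa [letterKey, key, natAbs_rank, Fin.val_inj] using this

lemma mem_descChains_DesBZ_iff_letterKey {ε : Fin n → ℕ} {π : Equiv.Perm (Fin n)} {k : ℕ}
    {a : Fin n → ℕ} :
    a ∈ descChains (DesBZ ε π) n k ↔
      (∀ j, key k (0, 0) < letterKey (assemble ε π a) j) ∧
        StrictMono (letterKey (assemble ε π a) ∘ π) := by
  have hseq : (fun i => key ((Fin.cons k a : Fin (n + 1) → ℕ) i) (letter ε π i)) =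
      Fin.cons (key k (0, 0)) (letterKey (assemble ε π a) ∘ π) := by
    funext i
    cases i using Fin.cases <;> simp [letter, letterKey]
  rw [mem_descChains_DesBZ_iff, hseq, Fin.strictMono_cons, π.forall_congr_left]
  simp

lemma perm_eq_of_strictMono_comp {α : Type*} [LinearOrder α] {f : Fin n → α}
    {σ τ : Equiv.Perm (Fin n)} (hσ : StrictMono (f ∘ σ)) (hτ : StrictMono (f ∘ τ)) : σ = τ := by
  have hsort : ∀ {σ : Equiv.Perm (Fin n)}, StrictMono (f ∘ σ) → σ = Tuple.sort f := fun h =>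
    Tuple.eq_sort_iff.2 ⟨h.monotone, fun i j hij hf => absurd hf (h hij).ne⟩
  rw [hsort hσ, hsort hτ]

end assemble

theorem sum_piFinset_colorValuePairs {M : Type*} [AddCommMonoid M] (r k n : ℕ)
    (g : (Fin n → ℕ × ℕ) → M) :
    ∑ φ ∈ Fintype.piFinset (fun _ => colorValuePairs r k), g φ =
      ∑ ε : Fin n → Fin r, ∑ π : Equiv.Perm (Fin n),
        ∑ a ∈ descChains (DesBZ (fun i => (ε i : ℕ)) π) n k, g (assemble (fun i => ε i) π a) := by
  simp_rw [← Fintype.sum_prod_type', sum_sigma']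
  symm
  refine sum_bij (fun x _ => assemble (fun i => x.1.1 i) x.1.2 x.2) ?_ ?_ ?_ (fun _ _ => rfl)
  · rintro ⟨⟨ε, π⟩, a⟩ ha
    rw [mem_sigma, mem_descChains_DesBZ_iff_letterKey] at ha
    refine Fintype.mem_piFinset.2 fun j => (mem_colorValuePairs_iff j).2 ⟨?_, ha.2.1 j⟩
    simp [assemble]
  · rintro ⟨⟨ε, π⟩, a⟩ ha ⟨⟨ε', π'⟩, a'⟩ ha' h
    rw [mem_sigma, mem_descChains_DesBZ_iff_letterKey] at ha ha'
    dsimp only at h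
    obtain rfl : π = π' := perm_eq_of_strictMono_comp ha.2.2 (h ▸ ha'.2.2)
    have hp := fun p => congrFun h (π p)
    simp only [assemble_apply_perm, Prod.mk.injEq, Fin.val_inj] at hp
    simp [funext fun p => (hp p).1, funext fun p => (hp p).2]
  · intro φ hφ
    have hφ' := fun j : Fin n => (mem_colorValuePairs_iff j).1 (Fintype.mem_piFinset.1 hφ j)
    set σ := Tuple.sort (letterKey φ)
    have hσ : StrictMono (letterKey φ ∘ σ) := (Tuple.monotone_sort _).strictMono_of_injective
      ((letterKey_injective φ).comp σ.injective)
    have hφσ : assemble (fun p => (φ (σ p)).1) σ (fun p => (φ (σ p)).2) = φ := by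
      funext j; simp [assemble]
    refine ⟨⟨⟨fun p => ⟨(φ (σ p)).1, (hφ' _).1⟩, σ⟩, fun p => (φ (σ p)).2⟩, ?_, hφσ⟩
    rw [mem_sigma, mem_descChains_DesBZ_iff_letterKey]
    exact ⟨mem_univ _, by simpa [hφσ] using ⟨fun j => (hφ' j).2, hσ⟩⟩

section weights

variable {R : Type*} [CommSemiring R] (u q : R)

lemma sum_colorValuePairs {r : ℕ} (hr : 0 < r) (k : ℕ) :
    ∑ x ∈ colorValuePairs r k, u ^ x.1 * q ^ x.2 =
      ∑ i ∈ range (k + 1), q ^ i + u * (∑ c ∈ range (r - 1), u ^ c) * ∑ i ∈ range k, q ^ i := by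
  obtain ⟨r, rfl⟩ : ∃ m, r = m + 1 := ⟨r - 1, by omega⟩
  have hcolored : ∀ c, ∑ v ∈ range (k + 1),
      (if c + 1 = 0 ∨ v < k then u ^ (c + 1) * q ^ v else 0) = u * u ^ c * ∑ v ∈ range k, q ^ v :=
    fun c => by
      rw [sum_range_succ, mul_sum, pow_succ']
      simpa using sum_congr rfl fun v hv => if_pos (mem_range.1 hv)
  rw [colorValuePairs, sum_filter, sum_product, sum_range_succ']
  simp only [hcolored]
  simp [← sum_mul, ← mul_sum, add_comm]

lemma prod_assemble {n : ℕ} (ε : Fin n → ℕ) (π : Equiv.Perm (Fin n)) (a : Fin n → ℕ) :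
    ∏ j, u ^ (assemble ε π a j).1 * q ^ (assemble ε π a j).2 = u ^ (∑ i, ε i) * q ^ ∑ i, a i := by
  rw [← Equiv.prod_comp π]
  simp [prod_mul_distrib, prod_pow_eq_pow_sum]

end weights

end WreathIdentity

open WreathIdentity PowerSeries

theorem wreath_identity_general (r n : ℕ) (hr : 0 < r) :
    (PowerSeries.mk fun k => (qNat (k + 1) + uP * uNat (r - 1) * qNat k) ^ n) *
        ∏ j ∈ Finset.range (n + 1),
          (1 - PowerSeries.C (qP ^ j) * PowerSeries.X) =
      ∑ ε : Fin n → Fin r, ∑ π : Equiv.Perm (Fin n),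
        PowerSeries.C
            (qP ^ majBZ (fun i => (ε i : ℕ)) π * uP ^ colwt (fun i => (ε i : ℕ))) *
          PowerSeries.X ^ desBZ (fun i => (ε i : ℕ)) π := by
  have hcoeff : ∀ k, (qNat (k + 1) + uP * uNat (r - 1) * qNat k) ^ n =
      ∑ ε : Fin n → Fin r, ∑ π : Equiv.Perm (Fin n), uP ^ colwt (fun i => (ε i : ℕ)) *
        ∑ a ∈ descChains (DesBZ (fun i => (ε i : ℕ)) π) n k, qP ^ ∑ i, a i := fun k => by
    rw [qNat, qNat, uNat, ← sum_colorValuePairs uP qP hr, sum_pow', sum_piFinset_colorValuePairs]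
    simp_rw [prod_assemble, mul_sum, colwt]
  have hseries : (PowerSeries.mk fun k => (qNat (k + 1) + uP * uNat (r - 1) * qNat k) ^ n) =
      ∑ ε : Fin n → Fin r, ∑ π : Equiv.Perm (Fin n),
        C (uP ^ colwt (fun i => (ε i : ℕ))) *
          descChainSeries qP (DesBZ (fun i => (ε i : ℕ)) π) n := by
    ext k
    simp only [coeff_mk, hcoeff, map_sum, coeff_C_mul, coeff_descChainSeries]
  simp_rw [hseries, sum_mul, mul_assoc, descChainSeries_mul_prod qP (DesBZ_subset_range _ _),
    majBZ, desBZ, ← mul_assoc, ← map_mul, mul_comm]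

theorem wreath_identity (r n : ℕ) (hr : 0 < r) (hn : 0 < n) :
    (PowerSeries.mk fun k => (qNat (k + 1) + uP * uNat (r - 1) * qNat k) ^ n) *
        ∏ j ∈ Finset.range (n + 1),
          (1 - PowerSeries.C (qP ^ j) * PowerSeries.X) =
      ∑ ε : Fin n → Fin r, ∑ π : Equiv.Perm (Fin n),
        PowerSeries.C
            (qP ^ majBZ (fun i => (ε i : ℕ)) π * uP ^ colwt (fun i => (ε i : ℕ))) *
          PowerSeries.X ^ desBZ (fun i => (ε i : ℕ)) π :=
  wreath_identity_general r n hr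
end

section
/- Let r and n be positive integers and let ε, ε' ∈ {0,1,…,r−1}^n satisfy supp(ε) = supp(ε'). Then for every integer k ≥ 0, the following identity holds in ℤ[q,u]: u^{col(ε')} · ∑_{v ∈ L_ε(k)} ∏_{i=1}^n m'(v_i, k) = u^{col(ε)} · ∑_{v ∈ L_{ε'}(k)} ∏_{i=1}^n m'(v_i, k). -/
open Finset

/-!
Summing `m'(v_i, k)` over the box `L_ε(k)` factorises coordinatewise. On a coloured
coordinate the block `(kε_i, k(ε_i+1)]` contributes `u^{ε_i}(1 + q + ⋯ + q^{k-1})`, on an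
uncoloured one `[0, k]` contributes `1 + q + ⋯ + q^k`. Hence the sum is
`u^{col(ε)}` times a product that depends only on `supp(ε)`.
-/

lemma mPrime_mul_add_add_one {k e t : ℕ} (he : 0 < e) (ht : t < k) :
    mPrime (k * e + t + 1) k = uP ^ e * qP ^ t := by
  have hk : 0 < k := by omega
  have hgt : ¬ k * e + t + 1 ≤ k := by nlinarith
  rw [mPrime, if_neg hgt, Nat.add_sub_cancel, Nat.mul_add_mod, Nat.mod_eq_of_lt ht,
    Nat.mul_add_div hk, Nat.div_eq_of_lt ht, Nat.add_zero, mul_comm]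

lemma sum_mPrime_Ioc {k e : ℕ} (he : 0 < e) :
    ∑ j ∈ Ioc (k * e) (k * (e + 1)), mPrime j k = uP ^ e * qNat k := by
  rw [← Ico_add_one_add_one_eq_Ioc, sum_Ico_eq_sum_range,
    show k * (e + 1) + 1 - (k * e + 1) = k by rw [Nat.mul_succ]; omega, qNat, mul_sum]
  refine sum_congr rfl fun t ht => ?_
  rw [add_right_comm, mPrime_mul_add_add_one he (mem_range.1 ht)]

lemma sum_mPrime_Icc_zero (k : ℕ) : ∑ j ∈ Icc 0 k, mPrime j k = qNat (k + 1) := by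
  rw [← Nat.range_succ_eq_Icc_zero, qNat]
  exact sum_congr rfl fun j hj => if_pos (Nat.lt_succ_iff.1 (mem_range.1 hj))

lemma sum_Lset_prod_mPrime {n : ℕ} (ε : Fin n → ℕ) (k : ℕ) :
    ∑ v ∈ Lset ε k, ∏ i, mPrime (v i) k =
      uP ^ colwt ε * ∏ i, if 0 < ε i then qNat k else qNat (k + 1) := by
  have hcoord : ∀ i, ∑ j ∈ (if 0 < ε i then Ioc (k * ε i) (k * (ε i + 1)) else Icc 0 k),
      mPrime j k = uP ^ ε i * if 0 < ε i then qNat k else qNat (k + 1) := by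
    intro i
    split_ifs with h
    · exact sum_mPrime_Ioc h
    · rw [Nat.eq_zero_of_not_pos h, pow_zero, one_mul, sum_mPrime_Icc_zero]
  rw [Lset, ← prod_univ_sum _ fun _ j => mPrime j k, colwt, ← prod_pow_eq_pow_sum,
    ← prod_mul_distrib]
  exact prod_congr rfl fun i _ => hcoord i

theorem same_support_lattice_sum_general (n : ℕ)
    (ε ε' : Fin n → ℕ)
    (hsupp : ∀ i, 0 < ε i ↔ 0 < ε' i) (k : ℕ) :
    uP ^ colwt ε' * ∑ v ∈ Lset ε k, ∏ i, mPrime (v i) k =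
      uP ^ colwt ε * ∑ v ∈ Lset ε' k, ∏ i, mPrime (v i) k := by
  simp only [sum_Lset_prod_mPrime, hsupp]
  ring

theorem same_support_lattice_sum (r n : ℕ) (hr : 0 < r) (hn : 0 < n)
    (ε ε' : Fin n → ℕ) (hε : ∀ i, ε i < r) (hε' : ∀ i, ε' i < r)
    (hsupp : ∀ i, 0 < ε i ↔ 0 < ε' i) (k : ℕ) :
    uP ^ colwt ε' * ∑ v ∈ Lset ε k, ∏ i, mPrime (v i) k =
      uP ^ colwt ε * ∑ v ∈ Lset ε' k, ∏ i, mPrime (v i) k :=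
  same_support_lattice_sum_general n ε ε' hsupp k
end

section
/- Let r ≥ 2 and n ≥ 1 be integers, let l be an integer with 0 ≤ l ≤ n, and let ε ∈ {0,1,…,r−1}^n be given by ε_i = 1 for 1 ≤ i ≤ l and ε_i = 0 for l < i ≤ n. Then the following identity holds in the ring of formal power series in t with coefficients in ℤ[q,u]: (∑_{k ≥ 0} (∑_{v ∈ L_ε(k)} ∏_{i=1}^n m'(v_i, k)) t^k) · ∏_{j=0}^{n} (1 − q^j t) = ∑_{(γ,π) ∈ G_ε} q^{maj(γ,π)} t^{des(γ,π)} u^l. -/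
open Finset

/-!
Reversing the values `1, …, l` (the letters of colour 1) turns the Biagioli–Zeng order on the
letters of a colored permutation in `G_ε` into the natural order, so its descents become the
ordinary descents of a permutation `σ`, together with a descent at `0` exactly when `σ(1) ≤ l`.
On the cone side, `∑_{v ∈ L_ε(k)} ∏ m'(v_i, k) = u^l [k]_q^l [k+1]_q^{n-l}`.

It remains to show, for `a + b = N`,
`∑_k [k]^a [k+1]^b t^k · ∏_{j ≤ N} (1 - q^j t) = ∑_σ q^{maj σ} t^{des σ + [σ(1) ≤ a]}`,
a refinement of Carlitz's identity. Removing the first letter `m + 1` of `σ` shifts the other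
descents one place to the right, which is the substitution `t ↦ q t`, and adds a descent at `0`
iff `m < a`. On the series side,
`q^k [k]^m [k+1]^{N-1-m} = [k]^m [k+1]^{N-m} - [k]^{m+1} [k+1]^{N-1-m}`, so the resulting sum over
`m` telescopes.
-/

open PowerSeries

section PowerSeriesIdentity

variable {R : Type*} [CommRing R] (q : R)

def qInt (k : ℕ) : R := ∑ i ∈ range k, q ^ i

lemma qInt_succ (k : ℕ) : qInt q (k + 1) = qInt q k + q ^ k := sum_range_succ _ k

def coneSeries (a b : ℕ) : R⟦X⟧ := mk fun k => qInt q k ^ a * qInt q (k + 1) ^ b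

lemma rescale_coneSeries (a b : ℕ) :
    rescale q (coneSeries q a b) = coneSeries q a (b + 1) - coneSeries q (a + 1) b := by
  ext k
  simp only [coneSeries, coeff_rescale, map_sub, coeff_mk, qInt_succ]
  ring

lemma X_mul_coneSeries_zero (b : ℕ) : X * coneSeries q 0 (b + 1) = coneSeries q (b + 1) 0 := by
  ext (_ | k)
  · simp [coneSeries, qInt]
  · simp [coneSeries, coeff_succ_X_mul]

lemma sum_ite_X_mul_rescale_coneSeries {a d : ℕ} (had : a ≤ d + 1) :
    ∑ m ∈ range (d + 1), (if m < a then X else 1) * rescale q (coneSeries q m (d - m)) =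
      (1 - X) * coneSeries q a (d + 1 - a) := by
  set f : ℕ → R⟦X⟧ := fun m => coneSeries q m (d + 1 - m)
  have htel : ∀ m ∈ range (d + 1), rescale q (coneSeries q m (d - m)) = f m - f (m + 1) := by
    intro m hm
    rw [rescale_coneSeries, show d - m + 1 = d + 1 - m by simp at hm; omega,
      show d - m = d + 1 - (m + 1) by omega]
  have hsplit : ∀ m, (if m < a then X else 1) * rescale q (coneSeries q m (d - m)) =
      rescale q (coneSeries q m (d - m)) +
        if m < a then (X - 1) * rescale q (coneSeries q m (d - m)) else 0 := by
    intro m; split_ifs <;> ring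
  have hlast : X * f 0 = f (d + 1) := by simpa [f] using X_mul_coneSeries_zero q d
  rw [sum_congr rfl fun m _ => hsplit m, sum_add_distrib, ← sum_filter,
    show (range (d + 1)).filter (· < a) = range a by ext; simp; omega, ← mul_sum,
    sum_congr rfl htel, sum_congr rfl fun m hm => htel m (by simp at hm ⊢; omega),
    sum_range_sub', sum_range_sub', ← hlast]
  ring

lemma rescale_C (c : R) : rescale q (C c) = C c := by
  ext (_ | k) <;> simp [coeff_C]

lemma prod_one_sub_C_pow_mul_X_succ (N : ℕ) :
    ∏ j ∈ range (N + 2), (1 - C (q ^ j) * X) =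
      (1 - X) * rescale q (∏ j ∈ range (N + 1), (1 - C (q ^ j) * X)) := by
  rw [prod_range_succ', map_prod, mul_comm]
  congr 1
  · simp
  · refine prod_congr rfl fun j _ => ?_
    rw [map_sub, map_one, map_mul, rescale_C, rescale_X, pow_succ, map_mul]
    ring

end PowerSeriesIdentity

section PrefixDescents

variable {n : ℕ}

lemma wval_zero (σ : Equiv.Perm (Fin n)) : wval σ 0 = 0 := by simp [wval]

lemma wval_succ (σ : Equiv.Perm (Fin n)) {i : ℕ} (hi : i < n) :
    wval σ (i + 1) = σ ⟨i, hi⟩ + 1 := by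
  simp [wval, hi]

/-- The descent set of the word `(a + ½) σ(1) ⋯ σ(n)`, positions numbered from `0`. -/
def prefixDes (a : ℕ) (σ : Equiv.Perm (Fin n)) : Finset ℕ :=
  (range n).filter fun i => wval σ (i + 1) < if i = 0 then a + 1 else wval σ i

lemma mem_prefixDes {a i : ℕ} {σ : Equiv.Perm (Fin n)} :
    i ∈ prefixDes a σ ↔ i < n ∧ wval σ (i + 1) < if i = 0 then a + 1 else wval σ i := by
  simp [prefixDes]

noncomputable def consPerm {d : ℕ} (m : Fin (d + 1)) (τ : Equiv.Perm (Fin d)) :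
    Equiv.Perm (Fin (d + 1)) :=
  Equiv.ofBijective (Fin.cons m (m.succAbove ∘ τ)) <| Finite.injective_iff_bijective.mp <|
    Fin.cons_injective_iff.mpr ⟨by simp, Fin.succAbove_right_injective.comp τ.injective⟩

@[simp]
lemma consPerm_zero {d : ℕ} (m : Fin (d + 1)) (τ : Equiv.Perm (Fin d)) :
    consPerm m τ 0 = m := by
  simp [consPerm]

@[simp]
lemma consPerm_succ {d : ℕ} (m : Fin (d + 1)) (τ : Equiv.Perm (Fin d)) (x : Fin d) :
    consPerm m τ x.succ = m.succAbove (τ x) := by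
  simp [consPerm]

lemma consPerm_bijective (d : ℕ) :
    Function.Bijective fun p : Fin (d + 1) × Equiv.Perm (Fin d) => consPerm p.1 p.2 := by
  refine (Fintype.bijective_iff_injective_and_card _).mpr ⟨?_, ?_⟩
  · rintro ⟨m, τ⟩ ⟨m', τ'⟩ h
    obtain rfl : m = m' := by simpa using congr($h 0)
    have hτ : τ = τ' := Equiv.ext fun x => by simpa using congr($h x.succ)
    rw [hτ]
  · simp [Fintype.card_perm, Nat.factorial_succ]

lemma sum_perm_succ {M : Type*} [AddCommMonoid M] (d : ℕ) (f : Equiv.Perm (Fin (d + 1)) → M) :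
    ∑ σ, f σ = ∑ m, ∑ τ, f (consPerm m τ) := by
  rw [← Fintype.sum_prod_type']
  exact (Fintype.sum_bijective _ (consPerm_bijective d) _ _ fun _ => rfl).symm

lemma zero_mem_prefixDes_consPerm {d a : ℕ} (m : Fin (d + 1)) (τ : Equiv.Perm (Fin d)) :
    0 ∈ prefixDes a (consPerm m τ) ↔ (m : ℕ) < a := by
  rw [mem_prefixDes, wval_succ _ (Nat.succ_pos d)]
  simp only [Fin.zero_eta, consPerm_zero, if_true]
  omega

lemma succ_mem_prefixDes_consPerm {d a j : ℕ} (m : Fin (d + 1)) (τ : Equiv.Perm (Fin d)) :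
    j + 1 ∈ prefixDes a (consPerm m τ) ↔ j ∈ prefixDes m τ := by
  simp only [mem_prefixDes, Nat.add_one_ne_zero, if_false, Nat.add_lt_add_iff_right]
  refine and_congr_right fun hj => ?_
  rw [wval_succ _ (by omega : j + 1 < d + 1), wval_succ _ hj,
    show (⟨j + 1, _⟩ : Fin (d + 1)) = Fin.succ ⟨j, hj⟩ from rfl, consPerm_succ]
  rcases j with _ | i
  · rw [wval_succ _ (Nat.succ_pos d)]
    simp only [Fin.zero_eta, consPerm_zero, if_true, Nat.add_lt_add_iff_right, Fin.val_fin_lt,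
      Fin.succAbove_lt_iff_castSucc_lt]
    exact Iff.rfl
  · rw [wval_succ _ (by omega : i + 1 < d + 1), wval_succ _ (by omega : i < d),
      show (⟨i + 1, _⟩ : Fin (d + 1)) = Fin.succ ⟨i, by omega⟩ from rfl, consPerm_succ]
    simp [Fin.succAbove_lt_succAbove_iff]

end PrefixDescents

section DescentPolynomial

variable {R : Type*} [CommRing R] (q : R)

noncomputable def desWeight (D : Finset ℕ) : R⟦X⟧ := C (q ^ ∑ i ∈ D, i) * X ^ D.card

lemma desWeight_map_succ (D : Finset ℕ) :
    desWeight q (D.map (addRightEmbedding 1)) = rescale q (desWeight q D) := by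
  simp only [desWeight, sum_map, card_map, addRightEmbedding_apply, sum_add_distrib,
    sum_const, smul_eq_mul, mul_one, map_mul, map_pow, rescale_C, rescale_X, mul_pow, pow_add]
  ring

lemma desWeight_insert_zero {D : Finset ℕ} (hD : 0 ∉ D) :
    desWeight q (insert 0 D) = X * desWeight q D := by
  rw [desWeight, desWeight, sum_insert hD, card_insert_of_notMem hD, zero_add, pow_succ]
  ring

lemma prefixDes_consPerm {d : ℕ} (a : ℕ) (m : Fin (d + 1)) (τ : Equiv.Perm (Fin d)) :
    prefixDes a (consPerm m τ) =
      if (m : ℕ) < a then insert 0 ((prefixDes m τ).map (addRightEmbedding 1))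
      else (prefixDes m τ).map (addRightEmbedding 1) := by
  ext (_ | j) <;> split_ifs <;>
    simp [zero_mem_prefixDes_consPerm, succ_mem_prefixDes_consPerm, *]

noncomputable def prefixDesPoly (a N : ℕ) : R⟦X⟧ :=
  ∑ σ : Equiv.Perm (Fin N), desWeight q (prefixDes a σ)

lemma prefixDesPoly_succ (a d : ℕ) :
    prefixDesPoly q a (d + 1) =
      ∑ m ∈ range (d + 1), (if m < a then X else 1) * rescale q (prefixDesPoly q m d) := by
  rw [prefixDesPoly, sum_perm_succ, ← Fin.sum_univ_eq_sum_range]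
  refine sum_congr rfl fun m _ => ?_
  rw [prefixDesPoly, map_sum, mul_sum]
  refine sum_congr rfl fun τ _ => ?_
  rw [prefixDes_consPerm, ← desWeight_map_succ]
  split_ifs
  · exact desWeight_insert_zero q (by simp)
  · rw [one_mul]

theorem coneSeries_mul_prod_eq_prefixDesPoly {a N : ℕ} (haN : a ≤ N) :
    coneSeries q a (N - a) * ∏ j ∈ range (N + 1), (1 - C (q ^ j) * X) =
      prefixDesPoly q a N := by
  induction N generalizing a with
  | zero =>
    obtain rfl : a = 0 := by omega
    have hcone : coneSeries q 0 0 = PowerSeries.mk 1 := by ext; simp [coneSeries]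
    simp [hcone, mk_one_mul_one_sub_eq_one, prefixDesPoly, prefixDes, desWeight]
  | succ d ih =>
    rw [prod_one_sub_C_pow_mul_X_succ, prefixDesPoly_succ, ← mul_assoc, mul_comm _ (1 - X),
      ← sum_ite_X_mul_rescale_coneSeries q haN, sum_mul]
    refine sum_congr rfl fun m hm => ?_
    rw [← ih (by simp at hm; omega), map_mul, mul_assoc]

end DescentPolynomial

lemma sum_Icc_mPrime (k : ℕ) : ∑ j ∈ Icc 0 k, mPrime j k = qInt qP (k + 1) := by
  rw [qInt, show Icc 0 k = range (k + 1) by ext; simp]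
  exact sum_congr rfl fun j hj => if_pos (by simp at hj; omega)

lemma sum_Ioc_mPrime (k : ℕ) : ∑ j ∈ Ioc k (k * 2), mPrime j k = uP * qInt qP k := by
  rw [show Ioc k (k * 2) = Ico (k + 1) (k * 2 + 1) by ext; simp, sum_Ico_eq_sum_range,
    show k * 2 + 1 - (k + 1) = k by omega, qInt, mul_sum]
  refine sum_congr rfl fun i hi => ?_
  rw [mem_range] at hi
  rw [mPrime, if_neg (by omega), show k + 1 + i - 1 = i + k by omega, Nat.add_mod_right,
    Nat.mod_eq_of_lt hi, Nat.add_div_right i (by omega), Nat.div_eq_of_lt hi,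
    zero_add, pow_one, mul_comm]

def initialOnes (n l : ℕ) : Fin n → ℕ := fun i => if (i : ℕ) < l then 1 else 0

lemma sum_Lset_initialOnes {n l : ℕ} (hl : l ≤ n) (k : ℕ) :
    ∑ v ∈ Lset (initialOnes n l) k, ∏ i, mPrime (v i) k =
      uP ^ l * qInt qP k ^ l * qInt qP (k + 1) ^ (n - l) := by
  have hfactor : ∀ i : Fin n, ∑ j ∈ (if 0 < initialOnes n l i then Ioc (k * initialOnes n l i)
      (k * (initialOnes n l i + 1)) else Icc 0 k), mPrime j k =
      if (i : ℕ) < l then uP * qInt qP k else qInt qP (k + 1) := by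
    intro i
    by_cases hi : (i : ℕ) < l <;> simp [initialOnes, hi, sum_Icc_mPrime, sum_Ioc_mPrime]
  rw [Lset, ← prod_univ_sum (f := fun _ j => mPrime j k), prod_congr rfl fun i _ => hfactor i,
    Fin.prod_univ_eq_prod_range (fun i => if i < l then uP * qInt qP k else qInt qP (k + 1)),
    ← prod_range_mul_prod_Ico _ hl, prod_congr rfl fun i hi => if_pos (mem_range.mp hi),
    prod_congr rfl fun i hi => if_neg (by simp at hi; omega), prod_const, prod_const,
    card_range, Nat.card_Ico, mul_pow]

def revVal (l x : ℕ) : ℕ := if x < l then l - 1 - x else x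

lemma revVal_revVal (l x : ℕ) : revVal l (revVal l x) = x := by
  unfold revVal; split_ifs <;> omega

lemma revVal_lt {l n x : ℕ} (hl : l ≤ n) (hx : x < n) : revVal l x < n := by
  unfold revVal; split_ifs <;> omega

def revPrefix {n l : ℕ} (hl : l ≤ n) : Equiv.Perm (Fin n) :=
  Function.Involutive.toPerm (fun j => ⟨revVal l j, revVal_lt hl j.isLt⟩)
    fun j => Fin.ext (revVal_revVal l j)

lemma revPrefix_apply_val {n l : ℕ} (hl : l ≤ n) (j : Fin n) :
    (revPrefix hl j : ℕ) = revVal l j := rfl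

lemma bzGT_iff_revVal_lt (l A B : ℕ) :
    bzGT (A + 1, if A < l then 1 else 0) (B + 1, if B < l then 1 else 0) ↔
      revVal l B < revVal l A := by
  simp only [bzGT, revVal]
  split_ifs <;> simp <;> omega

lemma bzGT_zero_iff_revVal_lt (l B : ℕ) :
    bzGT (0, 0) (B + 1, if B < l then 1 else 0) ↔ revVal l B < l := by
  simp only [bzGT, revVal]
  split_ifs <;> simp <;> omega

lemma wcolor_zero {n : ℕ} (ε : Fin n → ℕ) : wcolor ε 0 = 0 := by simp [wcolor]

lemma wcolor_succ {n : ℕ} (ε : Fin n → ℕ) {i : ℕ} (hi : i < n) :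
    wcolor ε (i + 1) = ε ⟨i, hi⟩ := by
  simp [wcolor, hi]

lemma DesBZ_initialOnes {n l : ℕ} (hl : l ≤ n) (π : Equiv.Perm (Fin n)) :
    DesBZ (fun i => initialOnes n l (π i)) π = prefixDes l (revPrefix hl * π) := by
  ext i
  simp only [DesBZ, mem_filter, mem_range, mem_prefixDes]
  refine and_congr_right fun hi => ?_
  rw [wval_succ π hi, wval_succ _ hi, wcolor_succ _ hi, Equiv.Perm.mul_apply, revPrefix_apply_val]
  rcases i with _ | j
  · rw [wval_zero, wcolor_zero, if_pos rfl, Nat.add_lt_add_iff_right]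
    exact bzGT_zero_iff_revVal_lt l _
  · have hj : j < n := by omega
    rw [wval_succ π hj, wval_succ _ hj, wcolor_succ _ hj, Equiv.Perm.mul_apply,
      revPrefix_apply_val, if_neg j.succ_ne_zero, Nat.add_lt_add_iff_right]
    exact bzGT_iff_revVal_lt l _ _

theorem cone_generating_function_for_initial_ones_general (n : ℕ)
    (l : ℕ) (hl : l ≤ n) (ε : Fin n → ℕ)
    (hε : ∀ i : Fin n, ε i = if (i : ℕ) < l then 1 else 0) :
    (PowerSeries.mk fun k => ∑ v ∈ Lset ε k, ∏ i, mPrime (v i) k) *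
        ∏ j ∈ Finset.range (n + 1),
          (1 - PowerSeries.C (R := MvPolynomial (Fin 2) ℤ) (qP ^ j) * PowerSeries.X) =
      ∑ π : Equiv.Perm (Fin n),
        PowerSeries.C (R := MvPolynomial (Fin 2) ℤ)
            (qP ^ majBZ (fun i => ε (π i)) π * uP ^ l) *
          PowerSeries.X ^ desBZ (fun i => ε (π i)) π := by
  obtain rfl : ε = initialOnes n l := funext hε
  have hcone : (PowerSeries.mk fun k => ∑ v ∈ Lset (initialOnes n l) k, ∏ i, mPrime (v i) k) =
      C (uP ^ l) * coneSeries qP l (n - l) := by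
    refine PowerSeries.ext fun k => ?_
    rw [coeff_C_mul, coneSeries, coeff_mk, coeff_mk, sum_Lset_initialOnes hl, mul_assoc]
  rw [hcone, mul_assoc, coneSeries_mul_prod_eq_prefixDesPoly qP hl, prefixDesPoly, mul_sum]
  refine (Fintype.sum_equiv (Equiv.mulLeft (revPrefix hl)) _ _ fun π => ?_).symm
  rw [majBZ, desBZ, DesBZ_initialOnes hl, Equiv.coe_mulLeft, desWeight, map_mul]
  ring

theorem cone_generating_function_for_initial_ones (r n : ℕ) (hr : 2 ≤ r) (hn : 1 ≤ n)
    (l : ℕ) (hl : l ≤ n) (ε : Fin n → ℕ)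
    (hε : ∀ i : Fin n, ε i = if (i : ℕ) < l then 1 else 0) :
    (PowerSeries.mk fun k => ∑ v ∈ Lset ε k, ∏ i, mPrime (v i) k) *
        ∏ j ∈ Finset.range (n + 1),
          (1 - PowerSeries.C (R := MvPolynomial (Fin 2) ℤ) (qP ^ j) * PowerSeries.X) =
      ∑ π : Equiv.Perm (Fin n),
        PowerSeries.C (R := MvPolynomial (Fin 2) ℤ)
            (qP ^ majBZ (fun i => ε (π i)) π * uP ^ l) *
          PowerSeries.X ^ desBZ (fun i => ε (π i)) π :=
  cone_generating_function_for_initial_ones_general n l hl ε hε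
end

section
/- Let r and n be positive integers and let ε, ε' ∈ {0,1,…,r−1}^n be such that ε' is a permutation of the entries of ε (i.e., there is a permutation τ of {1,…,n} with ε'_i = ε_{τ(i)} for all i). Then there exists a bijection Ω : G_ε → G_{ε'} such that Des(Ω(γ,π)) = Des(γ,π) for every (γ,π) ∈ G_ε; consequently Ω preserves des, maj, and col. -/
open Finset

/-- The set `G_ε ⊆ ℤ_r ≀ 𝔖_n` of colored permutations whose color vector is
`(ε_{π(1)},…,ε_{π(n)})`. -/
def Gset {n : ℕ} (ε : Fin n → ℕ) : Set ((Fin n → ℕ) × Equiv.Perm (Fin n)) :=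
  {p | p.1 = fun i => ε (p.2 i)}

/-!
Whether `j^c > k^d` depends only on which of `c, d` vanish and, when both or neither
vanish, on the relative order of `j` and `k`. Since `ε'` is a rearrangement of `ε`, the two
vectors have equally many zero entries, so some permutation `σ` carries the zero-colored
letters of `ε` increasingly onto those of `ε'`, and likewise the nonzero-colored ones.
Relabelling letters by `σ`, i.e. `π ↦ σ * π`, then maps `G_ε` onto `G_ε'` and leaves every
comparison between adjacent colored letters, hence the descent set, unchanged.
-/

section ClasswiseMonotone

variable {α : Type*} {p q : α → Prop} [DecidablePred p] [DecidablePred q]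

theorem Equiv.subtypeCongr_apply_of_pos (e : {x // p x} ≃ {x // q x})
    (f : {x // ¬p x} ≃ {x // ¬q x}) {x : α} (hx : p x) : e.subtypeCongr f x = e ⟨x, hx⟩ := by
  simp [Equiv.subtypeCongr, Equiv.sumCompl_symm_apply_of_pos hx]

theorem Equiv.subtypeCongr_apply_of_neg (e : {x // p x} ≃ {x // q x})
    (f : {x // ¬p x} ≃ {x // ¬q x}) {x : α} (hx : ¬p x) : e.subtypeCongr f x = f ⟨x, hx⟩ := by
  simp [Equiv.subtypeCongr, Equiv.sumCompl_symm_apply_of_neg hx]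

theorem exists_perm_classwise_strictMono [Fintype α] [LinearOrder α]
    (h : Fintype.card {x // p x} = Fintype.card {x // q x}) :
    ∃ σ : Equiv.Perm α, (∀ x, q (σ x) ↔ p x) ∧ ∀ x y, (p x ↔ p y) → (σ x < σ y ↔ x < y) := by
  have hc : Fintype.card {x // ¬p x} = Fintype.card {x // ¬q x} := by
    simp only [Fintype.card_subtype_compl, h]
  let e : {x // p x} ≃o {x // q x} :=
    (Fintype.orderIsoFinOfCardEq _ rfl).symm.trans (Fintype.orderIsoFinOfCardEq _ h.symm)
  let f : {x // ¬p x} ≃o {x // ¬q x} :=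
    (Fintype.orderIsoFinOfCardEq _ rfl).symm.trans (Fintype.orderIsoFinOfCardEq _ hc.symm)
  have hσp : ∀ {x} (hx : p x), e.toEquiv.subtypeCongr f.toEquiv x = e ⟨x, hx⟩ :=
    Equiv.subtypeCongr_apply_of_pos _ _
  have hσn : ∀ {x} (hx : ¬p x), e.toEquiv.subtypeCongr f.toEquiv x = f ⟨x, hx⟩ :=
    Equiv.subtypeCongr_apply_of_neg _ _
  refine ⟨e.toEquiv.subtypeCongr f.toEquiv, fun x => ?_, fun x y hxy => ?_⟩
  · by_cases hx : p x
    · simpa [hσp hx, hx] using (e ⟨x, hx⟩).2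
    · simpa [hσn hx, hx] using (f ⟨x, hx⟩).2
  · by_cases hx : p x
    · rw [hσp hx, hσp (hxy.mp hx), Subtype.coe_lt_coe, e.lt_iff_lt, Subtype.mk_lt_mk]
    · rw [hσn hx, hσn (hxy.not.mp hx), Subtype.coe_lt_coe, f.lt_iff_lt, Subtype.mk_lt_mk]

end ClasswiseMonotone

theorem bzGT_congr {j k j' k' c d c' d' : ℕ} (hc : c' = 0 ↔ c = 0) (hd : d' = 0 ↔ d = 0)
    (hlt : (c = 0 ↔ d = 0) → (j' < k' ↔ j < k) ∧ (k' < j' ↔ k < j)) :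
    bzGT (j', c') (k', d') ↔ bzGT (j, c) (k, d) := by
  unfold bzGT
  grind

section Relabel

variable {n : ℕ} {ε ε' : Fin n → ℕ} {σ : Equiv.Perm (Fin n)}

theorem wcolor_mul_eq_zero_iff (h0 : ∀ j, ε' (σ j) = 0 ↔ ε j = 0) (π : Equiv.Perm (Fin n))
    (i : ℕ) : wcolor (fun k => ε' ((σ * π) k)) i = 0 ↔ wcolor (fun k => ε (π k)) i = 0 := by
  unfold wcolor
  split_ifs
  · exact h0 _
  · rfl

theorem wval_mul_lt_wval_mul_iff (hm : ∀ j k, (ε j = 0 ↔ ε k = 0) → (σ j < σ k ↔ j < k))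
    (π : Equiv.Perm (Fin n)) {i i' : ℕ}
    (hcls : wcolor (fun k => ε (π k)) i = 0 ↔ wcolor (fun k => ε (π k)) i' = 0) :
    wval (σ * π) i < wval (σ * π) i' ↔ wval π i < wval π i' := by
  unfold wval
  unfold wcolor at hcls
  split_ifs at hcls ⊢
  · simp only [Equiv.Perm.mul_apply, add_lt_add_iff_right, Fin.val_fin_lt]
    exact hm _ _ hcls
  all_goals simp

theorem DesBZ_mul_left (h0 : ∀ j, ε' (σ j) = 0 ↔ ε j = 0)
    (hm : ∀ j k, (ε j = 0 ↔ ε k = 0) → (σ j < σ k ↔ j < k)) (π : Equiv.Perm (Fin n)) :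
    DesBZ (fun i => ε' ((σ * π) i)) (σ * π) = DesBZ (fun i => ε (π i)) π :=
  Finset.filter_congr fun i _ =>
    bzGT_congr (wcolor_mul_eq_zero_iff h0 π i) (wcolor_mul_eq_zero_iff h0 π (i + 1))
      fun h => ⟨wval_mul_lt_wval_mul_iff hm π h, wval_mul_lt_wval_mul_iff hm π h.symm⟩

end Relabel

def Gset.equivPerm {n : ℕ} (ε : Fin n → ℕ) : Gset ε ≃ Equiv.Perm (Fin n) where
  toFun x := x.1.2
  invFun π := ⟨(fun i => ε (π i), π), rfl⟩
  left_inv := fun ⟨⟨_, _⟩, h⟩ => Subtype.ext (Prod.ext h.symm rfl)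
  right_inv _ := rfl

theorem colwt_comp_perm {n : ℕ} (ε : Fin n → ℕ) (π : Equiv.Perm (Fin n)) :
    colwt (fun i => ε (π i)) = colwt ε :=
  Equiv.sum_comp π ε

theorem descent_preserving_bijection_general (n : ℕ) (ε ε' : Fin n → ℕ)
    (τ : Equiv.Perm (Fin n)) (hτ : ∀ i, ε' i = ε (τ i)) :
    ∃ Ω : Gset ε ≃ Gset ε',
      ∀ x : Gset ε,
        DesBZ (Ω x).1.1 (Ω x).1.2 = DesBZ x.1.1 x.1.2 ∧
        desBZ (Ω x).1.1 (Ω x).1.2 = desBZ x.1.1 x.1.2 ∧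
        majBZ (Ω x).1.1 (Ω x).1.2 = majBZ x.1.1 x.1.2 ∧
        colwt (Ω x).1.1 = colwt x.1.1 := by
  have hcard : Fintype.card {j // ε j = 0} = Fintype.card {j // ε' j = 0} :=
    Fintype.card_congr (τ.symm.subtypeEquiv fun j => by rw [hτ, τ.apply_symm_apply])
  obtain ⟨σ, h0, hm⟩ := exists_perm_classwise_strictMono hcard
  refine ⟨(Gset.equivPerm ε).trans ((Equiv.mulLeft σ).trans (Gset.equivPerm ε').symm), ?_⟩
  rintro ⟨⟨γ, π⟩, hγ⟩
  obtain rfl : γ = fun i => ε (π i) := hγ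
  have hDes := DesBZ_mul_left h0 hm π
  refine ⟨hDes, congrArg Finset.card hDes, congrArg (∑ i ∈ ·, i) hDes, ?_⟩
  change colwt (fun i => ε' ((σ * π) i)) = colwt (fun i => ε (π i))
  rw [colwt_comp_perm, colwt_comp_perm, funext hτ, colwt_comp_perm]

theorem descent_preserving_bijection (r n : ℕ) (hr : 0 < r) (hn : 0 < n)
    (ε ε' : Fin n → ℕ) (hε : ∀ i, ε i < r) (hε' : ∀ i, ε' i < r)
    (τ : Equiv.Perm (Fin n)) (hτ : ∀ i, ε' i = ε (τ i)) :
    ∃ Ω : Gset ε ≃ Gset ε',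
      ∀ x : Gset ε,
        DesBZ (Ω x).1.1 (Ω x).1.2 = DesBZ x.1.1 x.1.2 ∧
        desBZ (Ω x).1.1 (Ω x).1.2 = desBZ x.1.1 x.1.2 ∧
        majBZ (Ω x).1.1 (Ω x).1.2 = majBZ x.1.1 x.1.2 ∧
        colwt (Ω x).1.1 = colwt x.1.1 :=
  descent_preserving_bijection_general n ε ε' τ hτ
end
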